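/- Let H be a Hilbert space, let A : H ⊇ D → H be a closable densely defined linear operator with minimal closed extension Ā defined on D(Ā) (so that D is dense in D(Ā) with respect to the graph norm ‖x‖ + ‖Ax‖), and let a be a bounded linear operator on H with a(D) ⊆ D(Ā). Suppose the commutator [Ā, a] : D → H, x ↦ Ā(ax) − a(Āx), admits a continuous extension δ which is a bounded operator on H. Then (1) D(Ā) is invariant under a, i.e. a(D(Ā)) ⊆ D(Ā), and (2) for every x ∈ D(Ā), Ā(ax) − a(Āx) = δ(x); that is, δ extends the commutator [Ā, a] defined on all of D(Ā). -/

import Mathlib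

/-! A bounded operator `T` on `H × H` that maps the graph of `A` into the closed graph of `Ā`
maps the closure of the graph of `A`, i.e. the graph of `Ā`, into it as well. For
`T (u, v) = (a u, δ u + a v)` the hypothesis says `(a x, δ x + a (A x)) ∈ graph Ā` for `x ∈ D`;
for `x ∈ D(Ā)` the same membership gives both `a x ∈ D(Ā)` and `Ā (a x) = δ x + a (Ā x)`. -/

open Set

namespace LinearPMap

variable {R E F E' F' : Type*} [CommRing R] [TopologicalSpace R]
  [AddCommGroup E] [Module R E] [TopologicalSpace E] [ContinuousAdd E] [ContinuousSMul R E]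
  [AddCommGroup F] [Module R F] [TopologicalSpace F] [ContinuousAdd F] [ContinuousSMul R F]
  [AddCommGroup E'] [Module R E'] [TopologicalSpace E']
  [AddCommGroup F'] [Module R F'] [TopologicalSpace F']

theorem IsClosable.mapsTo_closure_graph {f : E →ₗ.[R] F} (hf : f.IsClosable)
    {g : E' →ₗ.[R] F'} (hg : g.IsClosed) {T : E × F → E' × F'} (hT : Continuous T)
    (h : MapsTo T f.graph g.graph) : MapsTo T f.closure.graph g.graph := by
  rw [← hf.graph_closure_eq_closure_graph, Submodule.topologicalClosure_coe, ← hg.closure_eq]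
  exact h.closure hT

theorem IsClosable.commutator_mem_closure_graph {f : E →ₗ.[R] E} (hf : f.IsClosable)
    {a δ : E →L[R] E} (hδ : ∀ x : f.domain, (a x, δ x + a (f x)) ∈ f.closure.graph)
    (x : f.closure.domain) : (a x, δ x + a (f.closure x)) ∈ f.closure.graph := by
  have hmaps : MapsTo (fun p : E × E ↦ (a p.1, δ p.1 + a p.2)) f.graph f.closure.graph := by
    intro _ hp
    obtain ⟨y, rfl⟩ := f.mem_graph_iff'.mp hp
    exact hδ y
  exact hf.mapsTo_closure_graph hf.closure_isClosed (by fun_prop) hmaps (f.closure.mem_graph x)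

end LinearPMap

theorem closed_extension_of_commutator_general
    (H : Type*) [NormedAddCommGroup H] [InnerProductSpace ℂ H]
    (A : H →ₗ.[ℂ] H) (hclosable : A.IsClosable)
    (a : H →L[ℂ] H) (hmapD : ∀ x (hx : x ∈ A.domain), a x ∈ A.closure.domain)
    (δ : H →L[ℂ] H)
    (hδ : ∀ x (hx : x ∈ A.domain),
      δ x = A.closure ⟨a x, hmapD x hx⟩ - a (A ⟨x, hx⟩)) :
    ∃ hinv : ∀ x ∈ A.closure.domain, a x ∈ A.closure.domain,
      ∀ x (hx : x ∈ A.closure.domain),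
        A.closure ⟨a x, hinv x hx⟩ - a (A.closure ⟨x, hx⟩) = δ x := by
  have hgraph (x : A.closure.domain) : (a x, δ x + a (A.closure x)) ∈ A.closure.graph := by
    refine hclosable.commutator_mem_closure_graph (fun ⟨y, hy⟩ ↦ ?_) x
    rw [hδ y hy, sub_add_cancel]
    exact A.closure.mem_graph ⟨a y, hmapD y hy⟩
  have hinv (x) (hx : x ∈ A.closure.domain) : a x ∈ A.closure.domain :=
    LinearPMap.mem_domain_of_mem_graph (hgraph ⟨x, hx⟩)
  refine ⟨hinv, fun x hx ↦ ?_⟩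
  rw [← (LinearPMap.image_iff (hinv x hx)).mpr (hgraph ⟨x, hx⟩), add_sub_cancel_right]

/-- let `A` be a closable densely defined operator on a Hilbert space `H` with
minimal closed extension `A.closure`, and let `a` be a bounded operator with
`a(D) ⊆ D(Ā)`. If the commutator `[Ā, a] : D → H` admits a continuous extension
`δ ∈ L(H)`, then `D(Ā)` is invariant under `a`, and `δ` extends the commutator
`[Ā, a]` defined on all of `D(Ā)`. -/
theorem closed_extension_of_commutator
    (H : Type*) [NormedAddCommGroup H] [InnerProductSpace ℂ H] [CompleteSpace H]
    (A : H →ₗ.[ℂ] H) (hdense : Dense (A.domain : Set H)) (hclosable : A.IsClosable)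
    (a : H →L[ℂ] H) (hmapD : ∀ x (hx : x ∈ A.domain), a x ∈ A.closure.domain)
    (δ : H →L[ℂ] H)
    (hδ : ∀ x (hx : x ∈ A.domain),
      δ x = A.closure ⟨a x, hmapD x hx⟩ - a (A ⟨x, hx⟩)) :
    ∃ hinv : ∀ x ∈ A.closure.domain, a x ∈ A.closure.domain,
      ∀ x (hx : x ∈ A.closure.domain),
        A.closure ⟨a x, hinv x hx⟩ - a (A.closure ⟨x, hx⟩) = δ x :=
  closed_extension_of_commutator_general H A hclosable a hmapD δ hδ
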